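/- For k = 1, the external field V(x) = x⁴/20 − 4x³/15 + x²/5 + 8x/5 and the density ψ(x) = (1/(10π))(x+2)^{1/2}(2−x)^{5/2} on [−2,2] satisfy the equilibrium condition: for all x ∈ (−2,2), the principal value integral 2 p.v.∫_{−2}^{2} ψ(s)/(x−s) ds equals V'(x) = x³/5 − 4x²/5 + 2x/5 + 8/5. -/

import Mathlib

/-!
Write `ψ(s) = (10π)⁻¹ √(4 - s²) (2 - s)²` and divide `(4 - s²)(2 - s)²` by `x - s`:
`√(4 - s²)(2 - s)² / (x - s) = q(s) / √(4 - s²) + (2 - x)²(4 - x²) / (√(4 - s²)(x - s))` with `q`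
a cubic. The first term has a primitive built from `√(4 - s²)` and `arcsin (s / 2)`; the second
one has the primitive `(2 - x)² √(4 - x²) (log (4 - xs + √(4 - x²)√(4 - s²)) - log |x - s|)`.
The singular part `log |x - s|` is even about `x`, so it cancels in the symmetric principal value,
which is therefore the difference of the primitive between the endpoints. There the logarithms
cancel as well and only `arcsin (±1) = ±π/2` survives, leaving `π (x³ - 4x² + 2x + 8) = 5π V'(x)`.
-/

open Real Filter Set Topology

theorem tendsto_integral_add_integral_of_hasDerivAt_sub_log {f F : ℝ → ℝ} {a b x c : ℝ}
    (hax : a < x) (hxb : x < b) (hF : ContinuousOn F (Icc a b))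
    (hf : ContinuousOn f (Icc a b \ {x}))
    (hderiv : ∀ s ∈ Ioo a b, s ≠ x → HasDerivAt (fun t => F t - c * log (x - t)) (f s) s) :
    Tendsto (fun ε => (∫ s in a..x - ε, f s) + ∫ s in x + ε..b, f s) (𝓝[>] 0)
      (𝓝 ((F b - c * log (x - b)) - (F a - c * log (x - a)))) := by
  set G : ℝ → ℝ := fun t => F t - c * log (x - t) with hG_def
  have hG : ContinuousOn G (Icc a b \ {x}) :=
    (hF.mono sdiff_subset).sub (continuousOn_const.mul <|
      (continuousOn_const.sub continuousOn_id).log fun t ht => sub_ne_zero.2 (Ne.symm ht.2))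
  have hFTC : ∀ u v, a ≤ u → u ≤ v → v ≤ b → x ∉ Icc u v → ∫ s in u..v, f s = G v - G u := by
    intro u v hau huv hvb hx
    have hsub : Icc u v ⊆ Icc a b \ {x} := fun s hs =>
      ⟨⟨hau.trans hs.1, hs.2.trans hvb⟩, fun h => hx (h ▸ hs)⟩
    exact intervalIntegral.integral_eq_sub_of_hasDerivAt_of_le huv (hG.mono hsub)
      (fun s hs => hderiv s ⟨hau.trans_lt hs.1, hs.2.trans_le hvb⟩
        fun h => hx (h ▸ Ioo_subset_Icc_self hs))
      ((hf.mono hsub).intervalIntegrable_of_Icc huv)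
  have hsymm : ∀ ε, G (x - ε) - G (x + ε) = F (x - ε) - F (x + ε) := by
    intro ε
    simp only [hG_def, sub_sub_cancel, sub_add_cancel_left, log_neg_eq_log]
    ring
  have heq : (fun ε => F (x - ε) - F (x + ε) + (G b - G a)) =ᶠ[𝓝[>] 0]
      fun ε => (∫ s in a..x - ε, f s) + ∫ s in x + ε..b, f s := by
    filter_upwards [Ioo_mem_nhdsGT (lt_min (sub_pos.2 hax) (sub_pos.2 hxb))] with ε hε
    obtain ⟨hε₀, hε⟩ := hε
    have hε₁ : ε < x - a := hε.trans_le (min_le_left _ _)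
    have hε₂ : ε < b - x := hε.trans_le (min_le_right _ _)
    rw [hFTC a (x - ε) le_rfl (by linarith) (by linarith) fun h => by linarith [h.2],
      hFTC (x + ε) b (by linarith) (by linarith) le_rfl fun h => by linarith [h.1],
      ← hsymm]
    ring
  have hFx : ContinuousAt F x := hF.continuousAt (Icc_mem_nhds hax hxb)
  have hlim : Tendsto (fun ε => F (x - ε) - F (x + ε)) (𝓝 0) (𝓝 0) := by
    have h₁ := hFx.tendsto.comp ((continuous_const.sub continuous_id).tendsto' 0 x (sub_zero x))
    have h₂ := hFx.tendsto.comp ((continuous_const.add continuous_id).tendsto' 0 x (add_zero x))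
    simpa using h₁.sub h₂
  simpa using ((hlim.add_const (G b - G a)).mono_left nhdsWithin_le_nhds).congr' heq

namespace CriticalQuartic

lemma sqrt_four_sub_sq_pos {s : ℝ} (hs : s ∈ Ioo (-2 : ℝ) 2) : 0 < √(4 - s ^ 2) :=
  sqrt_pos.2 (by nlinarith [hs.1, hs.2])

lemma sq_sqrt_four_sub_sq {s : ℝ} (hs : s ∈ Icc (-2 : ℝ) 2) : √(4 - s ^ 2) ^ 2 = 4 - s ^ 2 :=
  sq_sqrt (by nlinarith [hs.1, hs.2])

lemma hasDerivAt_sqrt_four_sub_sq {s : ℝ} (hs : s ∈ Ioo (-2 : ℝ) 2) :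
    HasDerivAt (fun t => √(4 - t ^ 2)) (-s / √(4 - s ^ 2)) s := by
  have hr := sqrt_four_sub_sq_pos hs
  refine (((hasDerivAt_id s).pow 2).const_sub 4 |>.sqrt (sqrt_pos.1 hr).ne').congr_deriv ?_
  simp only [Pi.pow_apply, id, Nat.cast_ofNat]
  field_simp
  ring

lemma hasDerivAt_arcsin_half {s : ℝ} (hs : s ∈ Ioo (-2 : ℝ) 2) :
    HasDerivAt (fun t => arcsin (t / 2)) (1 / √(4 - s ^ 2)) s := by
  have h := (hasDerivAt_arcsin (x := s / 2) (by linarith [hs.1]) (by linarith [hs.2])).comp s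
    ((hasDerivAt_id s).div_const 2)
  refine h.congr_deriv ?_
  rw [show 1 - (s / 2) ^ 2 = (4 - s ^ 2) / 2 ^ 2 by ring, sqrt_div' _ (by positivity),
    sqrt_sq zero_le_two]
  field_simp

lemma four_sub_mul_add_sqrt_mul_sqrt_pos {x s : ℝ} (hx : x ∈ Ioo (-2 : ℝ) 2)
    (hs : s ∈ Icc (-2 : ℝ) 2) : 0 < 4 - x * s + √(4 - x ^ 2) * √(4 - s ^ 2) := by
  have hxs : x * s < 4 := by nlinarith [sq_nonneg (x - s), hx.1, hx.2, hs.1, hs.2]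
  have : 0 ≤ √(4 - x ^ 2) * √(4 - s ^ 2) := by positivity
  linarith

lemma hasDerivAt_log_sub_log_sub {x s : ℝ} (hx : x ∈ Ioo (-2 : ℝ) 2) (hs : s ∈ Ioo (-2 : ℝ) 2)
    (hsx : s ≠ x) :
    HasDerivAt (fun t => log (4 - x * t + √(4 - x ^ 2) * √(4 - t ^ 2)) - log (x - t))
      (√(4 - x ^ 2) / (√(4 - s ^ 2) * (x - s))) s := by
  set c := √(4 - x ^ 2)
  set r := √(4 - s ^ 2) with hr_def
  have hr : 0 < r := sqrt_four_sub_sq_pos hs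
  have hc2 : c ^ 2 = 4 - x ^ 2 := sq_sqrt_four_sub_sq (Ioo_subset_Icc_self hx)
  have hr2 : r ^ 2 = 4 - s ^ 2 := sq_sqrt_four_sub_sq (Ioo_subset_Icc_self hs)
  have harg : 0 < 4 - x * s + c * r :=
    four_sub_mul_add_sqrt_mul_sqrt_pos hx (Ioo_subset_Icc_self hs)
  have hxs : x - s ≠ 0 := sub_ne_zero.2 (Ne.symm hsx)
  have hkernel := ((((hasDerivAt_id s).const_mul x).const_sub 4).add
    ((hasDerivAt_sqrt_four_sub_sq hs).const_mul c)).log harg.ne'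
  have hlog := ((hasDerivAt_id s).const_sub x).log hxs
  refine (hkernel.sub hlog).congr_deriv ?_
  simp only [Pi.add_apply, id, mul_one, ← hr_def]
  field_simp
  linear_combination c * hr2 - r * hc2

noncomputable def regularPrimitive (x s : ℝ) : ℝ :=
  ((4 - x) / 2 * s + (4 - s ^ 2) / 3 - (2 - x) ^ 2) * √(4 - s ^ 2)
    + (x ^ 3 - 4 * x ^ 2 + 2 * x + 8) * arcsin (s / 2)

lemma hasDerivAt_regularPrimitive (x : ℝ) {s : ℝ} (hs : s ∈ Ioo (-2 : ℝ) 2) :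
    HasDerivAt (regularPrimitive x)
      ((s ^ 3 + (x - 4) * s ^ 2 + (x ^ 2 - 4 * x) * s + x ^ 3 - 4 * x ^ 2 + 16) / √(4 - s ^ 2))
      s := by
  have hr : 0 < √(4 - s ^ 2) := sqrt_four_sub_sq_pos hs
  have hr2 := sq_sqrt_four_sub_sq (Ioo_subset_Icc_self hs)
  have hpoly : HasDerivAt (fun t => (4 - x) / 2 * t + (4 - t ^ 2) / 3 - (2 - x) ^ 2)
      ((4 - x) / 2 - 2 * s / 3) s := by
    refine ((((hasDerivAt_id s).const_mul _).add
      ((((hasDerivAt_id s).pow 2).const_sub 4).div_const 3)).sub_const _).congr_deriv ?_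
    simp only [id]
    ring
  refine ((hpoly.mul (hasDerivAt_sqrt_four_sub_sq hs)).add
    ((hasDerivAt_arcsin_half hs).const_mul _)).congr_deriv ?_
  field_simp
  linear_combination (12 - 3 * x - 4 * s) * hr2

noncomputable def quarticPrimitive (x s : ℝ) : ℝ :=
  regularPrimitive x s
    + (2 - x) ^ 2 * √(4 - x ^ 2) * log (4 - x * s + √(4 - x ^ 2) * √(4 - s ^ 2))

lemma hasDerivAt_quarticPrimitive_sub_log {x s : ℝ} (hx : x ∈ Ioo (-2 : ℝ) 2)
    (hs : s ∈ Ioo (-2 : ℝ) 2) (hsx : s ≠ x) :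
    HasDerivAt (fun t => quarticPrimitive x t - (2 - x) ^ 2 * √(4 - x ^ 2) * log (x - t))
      (√(4 - s ^ 2) * (2 - s) ^ 2 / (x - s)) s := by
  have hr : 0 < √(4 - s ^ 2) := sqrt_four_sub_sq_pos hs
  have hr2 := sq_sqrt_four_sub_sq (Ioo_subset_Icc_self hs)
  have hc2 := sq_sqrt_four_sub_sq (Ioo_subset_Icc_self hx)
  have hxs : x - s ≠ 0 := sub_ne_zero.2 (Ne.symm hsx)
  have h := (hasDerivAt_regularPrimitive x hs).add
    ((hasDerivAt_log_sub_log_sub hx hs hsx).const_mul ((2 - x) ^ 2 * √(4 - x ^ 2)))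
  have hsplit : (fun t => quarticPrimitive x t - (2 - x) ^ 2 * √(4 - x ^ 2) * log (x - t))
      = regularPrimitive x + fun t => (2 - x) ^ 2 * √(4 - x ^ 2)
          * (log (4 - x * t + √(4 - x ^ 2) * √(4 - t ^ 2)) - log (x - t)) := by
    funext t
    simp only [quarticPrimitive, Pi.add_apply]
    ring
  rw [hsplit]
  refine h.congr_deriv ?_
  field_simp
  linear_combination (2 - x) ^ 2 * hc2 - (2 - s) ^ 2 * hr2

lemma continuousOn_quarticPrimitive {x : ℝ} (hx : x ∈ Ioo (-2 : ℝ) 2) :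
    ContinuousOn (quarticPrimitive x) (Icc (-2) 2) := by
  refine Continuous.continuousOn (by unfold regularPrimitive; fun_prop) |>.add <|
    continuousOn_const.mul <| ContinuousOn.log (Continuous.continuousOn (by fun_prop)) ?_
  exact fun s hs => (four_sub_mul_add_sqrt_mul_sqrt_pos hx hs).ne'

lemma quarticPrimitive_sub_log_endpoints {x : ℝ} (hx : x ∈ Ioo (-2 : ℝ) 2) :
    (quarticPrimitive x 2 - (2 - x) ^ 2 * √(4 - x ^ 2) * log (x - 2))
      - (quarticPrimitive x (-2) - (2 - x) ^ 2 * √(4 - x ^ 2) * log (x - -2))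
      = π * (x ^ 3 - 4 * x ^ 2 + 2 * x + 8) := by
  have h₁ : x - 2 ≠ 0 := by linarith [hx.2]
  have h₂ : x - -2 ≠ 0 := by linarith [hx.1]
  have hlog₁ : log (4 - x * 2) = log 2 + log (x - 2) := by
    rw [show 4 - x * 2 = -(2 * (x - 2)) by ring, log_neg_eq_log, log_mul two_ne_zero h₁]
  have hlog₂ : log (4 - x * -2) = log 2 + log (x - -2) := by
    rw [show 4 - x * -2 = 2 * (x - -2) by ring, log_mul two_ne_zero h₂]
  simp only [quarticPrimitive, regularPrimitive, show (2 : ℝ) / 2 = 1 by norm_num,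
    show (-2 : ℝ) / 2 = -1 by norm_num, arcsin_one, arcsin_neg_one,
    show (4 : ℝ) - 2 ^ 2 = 0 by norm_num, neg_sq, sqrt_zero,
    mul_zero, add_zero, hlog₁, hlog₂]
  ring

lemma rpow_half_mul_rpow_five_halves {s : ℝ} (hs : s ∈ Icc (-2 : ℝ) 2) :
    (s + 2) ^ ((1 : ℝ) / 2) * (2 - s) ^ ((5 : ℝ) / 2) = √(4 - s ^ 2) * (2 - s) ^ 2 := by
  have h₁ : 0 ≤ s + 2 := by linarith [hs.1]
  have h₂ : 0 ≤ 2 - s := by linarith [hs.2]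
  rw [show (5 : ℝ) / 2 = 2 + 1 / 2 by norm_num, rpow_add' h₂ (by norm_num), rpow_two,
    ← sqrt_eq_rpow, ← sqrt_eq_rpow, show 4 - s ^ 2 = (s + 2) * (2 - s) by ring, sqrt_mul h₁]
  ring

end CriticalQuartic

open CriticalQuartic in
/-- Equilibrium condition for the critical quartic potential: for
`ψ(s) = (1/(10π))(s+2)^{1/2}(2−s)^{5/2}` on `[−2,2]` and
`V(x) = x⁴/20 − 4x³/15 + x²/5 + 8x/5`, for every `x ∈ (−2,2)` the principal value
`2 p.v.∫_{−2}^{2} ψ(s)/(x−s) ds` equals `V'(x) = x³/5 − 4x²/5 + 2x/5 + 8/5`. -/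
theorem equilibrium_condition_critical_quartic :
    let ψ : ℝ → ℝ := fun s => (1 / (10 * π)) * (s + 2) ^ ((1 : ℝ)/2) * (2 - s) ^ ((5 : ℝ)/2)
    ∀ x ∈ Set.Ioo (-2 : ℝ) 2,
      Tendsto (fun ε : ℝ =>
          2 * ((∫ s in (-2 : ℝ)..(x - ε), ψ s / (x - s)) +
               ∫ s in (x + ε)..(2 : ℝ), ψ s / (x - s)))
        (nhdsWithin 0 (Set.Ioi 0))
        (nhds (x ^ 3 / 5 - 4 * x ^ 2 / 5 + 2 * x / 5 + 8 / 5)) := by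
  intro ψ x hx
  have hψ : ∀ s ∈ Icc (-2 : ℝ) 2,
      ψ s / (x - s) = (10 * π)⁻¹ * (√(4 - s ^ 2) * (2 - s) ^ 2 / (x - s)) := by
    intro s hs
    simp only [ψ, mul_assoc, rpow_half_mul_rpow_five_halves hs]
    ring
  have hψ_cont : ContinuousOn (fun s => ψ s / (x - s)) (Icc (-2) 2 \ {x}) :=
    (Continuous.continuousOn (by fun_prop (disch := norm_num))).div
      (continuousOn_const.sub continuousOn_id) fun s hs => sub_ne_zero.2 (Ne.symm hs.2)
  have hpv := tendsto_integral_add_integral_of_hasDerivAt_sub_log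
    (F := fun s => (10 * π)⁻¹ * quarticPrimitive x s)
    (c := (10 * π)⁻¹ * ((2 - x) ^ 2 * √(4 - x ^ 2))) hx.1 hx.2
    (continuousOn_const.mul (continuousOn_quarticPrimitive hx)) hψ_cont fun s hs hsx => by
      rw [hψ s (Ioo_subset_Icc_self hs)]
      exact ((hasDerivAt_quarticPrimitive_sub_log hx hs hsx).const_mul (10 * π)⁻¹)
        |>.congr_of_eventuallyEq (.of_forall fun t => by ring)
  convert hpv.const_mul 2 using 2
  field_simp
  linear_combination -10 * quarticPrimitive_sub_log_endpoints hx
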